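/- arXiv:1303.3872 — 10 statements merged into one kernel-verified Lean document; each statement's English description precedes it below -/
import Mathlib

section
/- Let α, β, γ, λ be real numbers satisfying the system: x₁(β−γ) = x₂(γ−α) = x₃(α−β) = 0 for some reals x₁,x₂,x₃; α²(β+γ) + (β−γ)²(β+γ) − 2α³ + 2λ = 0; β²(α+γ) + (α−γ)²(α+γ) − 2β³ + 2λ = 0; γ²(α+β) + (α−β)²(α+β) − 2γ³ + 2λ = 0. If moreover α = β and x₁ = x₂ = 0 and β ≠ γ, then γ = 0. -/
theorem stmt1_general (α β γ lam : ℝ)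
    (h4 : α^2 * (β + γ) + (β - γ)^2 * (β + γ) - 2 * α^3 + 2 * lam = 0)
    (h6 : γ^2 * (α + β) + (α - β)^2 * (α + β) - 2 * γ^3 + 2 * lam = 0)
    (hab : α = β) (hbg : β ≠ γ) :
    γ = 0 := by
  subst hab
  -- Subtracting the third equation from the first eliminates `lam` and leaves `3 γ² (γ - α)`.
  have key : γ ^ 2 * (γ - α) = 0 := by linear_combination (h4 - h6) / 3
  have hγ : γ ^ 2 = 0 := (mul_eq_zero.mp key).resolve_right (sub_ne_zero.mpr hbg.symm)
  exact pow_eq_zero_iff two_ne_zero |>.mp hγ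

theorem stmt1 (α β γ lam x₁ x₂ x₃ : ℝ)
    (h1 : x₁ * (β - γ) = 0) (h2 : x₂ * (γ - α) = 0) (h3 : x₃ * (α - β) = 0)
    (h4 : α^2 * (β + γ) + (β - γ)^2 * (β + γ) - 2 * α^3 + 2 * lam = 0)
    (h5 : β^2 * (α + γ) + (α - γ)^2 * (α + γ) - 2 * β^3 + 2 * lam = 0)
    (h6 : γ^2 * (α + β) + (α - β)^2 * (α + β) - 2 * γ^3 + 2 * lam = 0)
    (hab : α = β) (hx1 : x₁ = 0) (hx2 : x₂ = 0) (hbg : β ≠ γ) :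
    γ = 0 :=
  stmt1_general α β γ lam h4 h6 hab hbg
end

section
/- Let α, β, γ, λ, x₁, x₂, x₃ be real numbers with β ≠ 0 satisfying: β x₂ + (α−γ) x₃ = 0; β x₃ + (γ−α) x₂ = 0; β(α² + 4αγ + 4β² − 8γ²) = 0; α³ − α²γ + 4β²γ − λ = 0; α³ − α²γ + 4β²γ + 2λ + 4β x₁ = 0; α³ − α²γ + 4β²γ + 2λ − 4β x₁ = 0. Then x₁ = x₂ = x₃ = 0. -/
/-! Subtracting the last two equations gives `8 β x₁ = 0`; the first two form a linear system
in `(x₂, x₃)` with determinant `β² + (α - γ)² > 0`. -/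

theorem eq_zero_of_mul_add_mul_eq_zero_of_mul_sub_mul_eq_zero {K : Type*} [Field K] [LinearOrder K]
    [IsStrictOrderedRing K] {a b x y : K} (hb : b ≠ 0)
    (h₁ : b * x + a * y = 0) (h₂ : b * y - a * x = 0) : x = 0 ∧ y = 0 := by
  have hdet : b ^ 2 + a ^ 2 ≠ 0 := by positivity
  have hx : (b ^ 2 + a ^ 2) * x = 0 := by linear_combination b * h₁ - a * h₂
  have hx₀ : x = 0 := (mul_eq_zero.mp hx).resolve_left hdet
  have hy : b * y = 0 := by linear_combination h₂ + a * hx₀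
  exact ⟨hx₀, (mul_eq_zero.mp hy).resolve_left hb⟩

theorem stmt2_general (α β γ lam x₁ x₂ x₃ : ℝ) (hβ : β ≠ 0)
    (h1 : β * x₂ + (α - γ) * x₃ = 0)
    (h2 : β * x₃ + (γ - α) * x₂ = 0)
    (h5 : α^3 - α^2 * γ + 4 * β^2 * γ + 2 * lam + 4 * β * x₁ = 0)
    (h6 : α^3 - α^2 * γ + 4 * β^2 * γ + 2 * lam - 4 * β * x₁ = 0) :
    x₁ = 0 ∧ x₂ = 0 ∧ x₃ = 0 := by
  have hx₁ : β * x₁ = 0 := by linear_combination (h5 - h6) / 8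
  obtain ⟨hx₂, hx₃⟩ :=
    eq_zero_of_mul_add_mul_eq_zero_of_mul_sub_mul_eq_zero hβ h1 (by linear_combination h2)
  exact ⟨(mul_eq_zero.mp hx₁).resolve_left hβ, hx₂, hx₃⟩

theorem stmt2 (α β γ lam x₁ x₂ x₃ : ℝ) (hβ : β ≠ 0)
    (h1 : β * x₂ + (α - γ) * x₃ = 0)
    (h2 : β * x₃ + (γ - α) * x₂ = 0)
    (h3 : β * (α^2 + 4 * α * γ + 4 * β^2 - 8 * γ^2) = 0)
    (h4 : α^3 - α^2 * γ + 4 * β^2 * γ - lam = 0)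
    (h5 : α^3 - α^2 * γ + 4 * β^2 * γ + 2 * lam + 4 * β * x₁ = 0)
    (h6 : α^3 - α^2 * γ + 4 * β^2 * γ + 2 * lam - 4 * β * x₁ = 0) :
    x₁ = 0 ∧ x₂ = 0 ∧ x₃ = 0 :=
  stmt2_general α β γ lam x₁ x₂ x₃ hβ h1 h2 h5 h6
end

section
/- Let α, β, λ, x₁, x₂, x₃ be real numbers satisfying: x₂ + x₃(2α − 2β − 1) = 0; x₃ − x₂(2α − 2β + 1) = 0; α² − 8β² + 4αβ + 4x₁ = 0; α²(α−β) − λ = 0; 2α³ − 8β² + 4αβ − α²(2β−1) + 4x₁ + 4λ = 0; 2α³ + 8β² − 4αβ − α²(2β+1) − 4x₁ + 4λ = 0. Then λ = 0, and either (α = β, x₂ = x₃, x₁ = (3/4)β²) or (α = 0, x₂ = x₃ = 0, x₁ = 2β²). -/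
/-!
Subtracting the third equation and twice the fourth from the fifth leaves `6λ = 0`, so the
fourth equation becomes `α² (α - β) = 0`. If `α = β`, the first equation reads `x₂ = x₃`. Otherwise
`α = 0 ≠ β`, and substituting the second equation into the first gives `4 β² x₂ = 0`, which forces
`x₂ = x₃ = 0`. In both cases `x₁` is read off from the third equation.
-/

theorem stmt4_general (α β lam x₁ x₂ x₃ : ℝ)
    (h1 : x₂ + x₃ * (2 * α - 2 * β - 1) = 0)
    (h2 : x₃ - x₂ * (2 * α - 2 * β + 1) = 0)
    (h3 : α^2 - 8 * β^2 + 4 * α * β + 4 * x₁ = 0)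
    (h4 : α^2 * (α - β) - lam = 0)
    (h5 : 2 * α^3 - 8 * β^2 + 4 * α * β - α^2 * (2 * β - 1) + 4 * x₁ + 4 * lam = 0) :
    lam = 0 ∧
      ((α = β ∧ x₂ = x₃ ∧ x₁ = (3 / 4) * β^2) ∨
       (α = 0 ∧ x₂ = 0 ∧ x₃ = 0 ∧ x₁ = 2 * β^2)) := by
  have hlam : lam = 0 := by linear_combination (h5 - h3 - 2 * h4) / 6
  have hcubic : α ^ 2 * (α - β) = 0 := by linear_combination h4 + hlam
  refine ⟨hlam, ?_⟩
  by_cases hαβ : α = β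
  · subst hαβ
    exact .inl ⟨rfl, by linear_combination h1, by linear_combination h3 / 4⟩
  · have hα : α = 0 :=
      pow_eq_zero_iff two_ne_zero |>.mp <|
        (mul_eq_zero.mp hcubic).resolve_right (sub_ne_zero.mpr hαβ)
    subst hα
    have hx₂ : x₂ = 0 := by
      have h : 4 * β ^ 2 * x₂ = 0 := by linear_combination h1 + (2 * β + 1) * h2
      simpa [Ne.symm hαβ] using h
    exact .inr ⟨rfl, hx₂, by linear_combination h2 + (1 - 2 * β) * hx₂,
      by linear_combination h3 / 4⟩

theorem stmt4 (α β lam x₁ x₂ x₃ : ℝ)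
    (h1 : x₂ + x₃ * (2 * α - 2 * β - 1) = 0)
    (h2 : x₃ - x₂ * (2 * α - 2 * β + 1) = 0)
    (h3 : α^2 - 8 * β^2 + 4 * α * β + 4 * x₁ = 0)
    (h4 : α^2 * (α - β) - lam = 0)
    (h5 : 2 * α^3 - 8 * β^2 + 4 * α * β - α^2 * (2 * β - 1) + 4 * x₁ + 4 * lam = 0)
    (h6 : 2 * α^3 + 8 * β^2 - 4 * α * β - α^2 * (2 * β + 1) - 4 * x₁ + 4 * lam = 0) :
    lam = 0 ∧
      ((α = β ∧ x₂ = x₃ ∧ x₁ = (3 / 4) * β^2) ∨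
       (α = 0 ∧ x₂ = 0 ∧ x₃ = 0 ∧ x₁ = 2 * β^2)) :=
  stmt4_general α β lam x₁ x₂ x₃ h1 h2 h3 h4 h5
end

section
/- Let α, λ, x₁, x₂, x₃ be real numbers satisfying: 2x₁ + 3α² = 0; √2·x₂ + √2·x₃ + λ = 0; 3√2·α − x₂ + x₃ = 0; 3α + √2·x₃ − λ = 0; 3α − √2·x₂ + λ = 0. Then λ = 0, x₁ = −3α²/2, x₂ = 3α/√2, and x₃ = −3α/√2. In particular, if α = 0 then x₁ = x₂ = x₃ = 0. -/
theorem stmt5_general (α lam x₁ x₂ x₃ : ℝ)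
    (h1 : 2 * x₁ + 3 * α^2 = 0)
    (h2 : Real.sqrt 2 * x₂ + Real.sqrt 2 * x₃ + lam = 0)
    (h4 : 3 * α + Real.sqrt 2 * x₃ - lam = 0)
    (h5 : 3 * α - Real.sqrt 2 * x₂ + lam = 0) :
    lam = 0 ∧ x₁ = -(3 * α^2) / 2 ∧ x₂ = 3 * α / Real.sqrt 2 ∧ x₃ = -(3 * α) / Real.sqrt 2
      ∧ (α = 0 → x₁ = 0 ∧ x₂ = 0 ∧ x₃ = 0) := by
  have hsqrt : Real.sqrt 2 ≠ 0 := by positivity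
  -- `h4 - h5 - h2` reads `-3 * lam = 0`, the products with `√2` cancelling.
  have hlam : lam = 0 := by linarith
  have hx₁ : x₁ = -(3 * α^2) / 2 := by linarith
  have hx₂ : x₂ = 3 * α / Real.sqrt 2 := by
    rw [eq_div_iff hsqrt]
    linarith
  have hx₃ : x₃ = -(3 * α) / Real.sqrt 2 := by
    rw [eq_div_iff hsqrt]
    linarith
  refine ⟨hlam, hx₁, hx₂, hx₃, ?_⟩
  rintro rfl
  simp [hx₁, hx₂, hx₃]

theorem stmt5 (α lam x₁ x₂ x₃ : ℝ)
    (h1 : 2 * x₁ + 3 * α^2 = 0)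
    (h2 : Real.sqrt 2 * x₂ + Real.sqrt 2 * x₃ + lam = 0)
    (h3 : 3 * Real.sqrt 2 * α - x₂ + x₃ = 0)
    (h4 : 3 * α + Real.sqrt 2 * x₃ - lam = 0)
    (h5 : 3 * α - Real.sqrt 2 * x₂ + lam = 0) :
    lam = 0 ∧ x₁ = -(3 * α^2) / 2 ∧ x₂ = 3 * α / Real.sqrt 2 ∧ x₃ = -(3 * α) / Real.sqrt 2
      ∧ (α = 0 → x₁ = 0 ∧ x₂ = 0 ∧ x₃ = 0) :=
  stmt5_general α lam x₁ x₂ x₃ h1 h2 h4 h5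
end

section
/- Let α, β, γ, δ be real numbers with αγ − βδ = 0, α + δ ≠ 0, α ≠ 0, δ ≠ 0, α ≠ δ, β ≠ 0, and α² − β² ≠ 0, and suppose γ = βδ/α. If moreover α²β² − 3β²δ² + 2αβ²δ + 4α⁴ = 0 and 3α²β² − β²δ² − 2αβ²δ − 4α²δ² = 0, then (α² + β²)(α² − δ²) = 0, a contradiction; hence no such α, β, γ, δ exist. -/
/-! The sum of the two constraints is `4 (α² + β²)(α² - δ²)`. Since `α ≠ 0` the first
factor is positive, so `α = ±δ`, which both `α ≠ δ` and `α + δ ≠ 0` exclude. -/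

theorem sq_add_sq_mul_sq_sub_sq_eq_zero {α β δ : ℝ}
    (e1 : α^2 * β^2 - 3 * β^2 * δ^2 + 2 * α * β^2 * δ + 4 * α^4 = 0)
    (e2 : 3 * α^2 * β^2 - β^2 * δ^2 - 2 * α * β^2 * δ - 4 * α^2 * δ^2 = 0) :
    (α^2 + β^2) * (α^2 - δ^2) = 0 := by
  linear_combination (e1 + e2) / 4

theorem stmt6_general (α β δ : ℝ)
    (hsum : α + δ ≠ 0)
    (hα : α ≠ 0) (hαδ : α ≠ δ)
    (e1 : α^2 * β^2 - 3 * β^2 * δ^2 + 2 * α * β^2 * δ + 4 * α^4 = 0)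
    (e2 : 3 * α^2 * β^2 - β^2 * δ^2 - 2 * α * β^2 * δ - 4 * α^2 * δ^2 = 0) :
    False := by
  have hpos : α^2 + β^2 ≠ 0 := by positivity
  have hsq : α^2 = δ^2 :=
    sub_eq_zero.mp ((mul_eq_zero.mp (sq_add_sq_mul_sq_sub_sq_eq_zero e1 e2)).resolve_left hpos)
  rcases sq_eq_sq_iff_eq_or_eq_neg.mp hsq with h | h
  · exact hαδ h
  · exact hsum (by rw [h]; ring)

theorem stmt6 (α β γ δ : ℝ)
    (hcomp : α * γ - β * δ = 0) (hsum : α + δ ≠ 0)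
    (hα : α ≠ 0) (hδ : δ ≠ 0) (hαδ : α ≠ δ) (hβ : β ≠ 0)
    (hab : α^2 - β^2 ≠ 0) (hγ : γ = β * δ / α)
    (e1 : α^2 * β^2 - 3 * β^2 * δ^2 + 2 * α * β^2 * δ + 4 * α^4 = 0)
    (e2 : 3 * α^2 * β^2 - β^2 * δ^2 - 2 * α * β^2 * δ - 4 * α^2 * δ^2 = 0) :
    False :=
  stmt6_general α β δ hsum hα hαδ e1 e2
end

section
/- Let α, β, δ be real numbers with α ≠ 0, δ ≠ 0, α + δ ≠ 0, α ≠ δ, β ≠ 0, satisfying 4α⁴ − α²β² − 2αβ²δ + 3β²δ² = 0 and α²(3β² + 4δ²) − 2αβ²δ − β²δ² = 0. Then no such α, β, δ exist. -/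
/-!
The difference of the two equations is `4 (α² - β²) (α² - δ²)`. The factor `α² - δ²` vanishes only
for `α = ±δ`. If instead `β² = α²`, the second equation becomes `α² (3α² - 2αδ + 3δ²) = 0`, and the
quadratic form `3a² - 2ab + 3b² = (a - b)² + 2a² + 2b²` is positive definite, forcing `α = 0`.
-/

lemma three_sq_sub_two_mul_add_three_sq_pos {R : Type*} [Field R] [LinearOrder R]
    [IsStrictOrderedRing R] {a : R} (b : R) (ha : a ≠ 0) :
    0 < 3 * a ^ 2 - 2 * a * b + 3 * b ^ 2 := by
  nlinarith [sq_nonneg (a - b), sq_pos_of_ne_zero ha, sq_nonneg b]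

theorem stmt7_general (α β δ : ℝ)
    (hα : α ≠ 0) (hsum : α + δ ≠ 0) (hαδ : α ≠ δ)
    (e1 : 4 * α^4 - α^2 * β^2 - 2 * α * β^2 * δ + 3 * β^2 * δ^2 = 0)
    (e2 : α^2 * (3 * β^2 + 4 * δ^2) - 2 * α * β^2 * δ - β^2 * δ^2 = 0) :
    False := by
  have hfactor : (α ^ 2 - β ^ 2) * (α ^ 2 - δ ^ 2) = 0 := by linear_combination (e1 - e2) / 4
  rcases mul_eq_zero.mp hfactor with hβ | hδ
  · have hreduced : α ^ 2 * (3 * α ^ 2 - 2 * α * δ + 3 * δ ^ 2) = 0 := by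
      linear_combination e2 + (3 * α ^ 2 - 2 * α * δ - δ ^ 2) * hβ
    exact mul_ne_zero (pow_ne_zero 2 hα)
      (three_sq_sub_two_mul_add_three_sq_pos δ hα).ne' hreduced
  · rcases sq_eq_sq_iff_eq_or_eq_neg.mp (sub_eq_zero.mp hδ) with h | h
    · exact hαδ h
    · exact hsum (by rw [h, neg_add_cancel])

theorem stmt7 (α β δ : ℝ)
    (hα : α ≠ 0) (hδ : δ ≠ 0) (hsum : α + δ ≠ 0) (hαδ : α ≠ δ) (hβ : β ≠ 0)
    (e1 : 4 * α^4 - α^2 * β^2 - 2 * α * β^2 * δ + 3 * β^2 * δ^2 = 0)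
    (e2 : α^2 * (3 * β^2 + 4 * δ^2) - 2 * α * β^2 * δ - β^2 * δ^2 = 0) :
    False :=
  stmt7_general α β δ hα hsum hαδ e1 e2
end

section
/- Let α, β, γ, δ, λ, x₁, x₂, x₃ be real numbers with αγ = 0 and α + δ ≠ 0, satisfying: γx₃ = 0; αx₁ + γx₂ + βx₃ = 0; 2αx₃ + γ³ − λ = 0; γ³ − 2δx₃ + 2λ = 0; βγ² + 4βx₁ + 4δx₂ = 0. Then γ = 0. -/
theorem stmt8_general (α γ δ lam x₃ : ℝ)
    (hag : α * γ = 0)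
    (h1 : γ * x₃ = 0)
    (h3 : 2 * α * x₃ + γ^3 - lam = 0)
    (h4 : γ^3 - 2 * δ * x₃ + 2 * lam = 0) :
    γ = 0 := by
  by_contra hγ
  have hα : α = 0 := (mul_eq_zero.mp hag).resolve_right hγ
  have hx₃ : x₃ = 0 := (mul_eq_zero.mp h1).resolve_left hγ
  -- h3 and h4 now read γ³ = lam and γ³ = -2 lam.
  have hcube : γ ^ 3 = 0 := by
    subst hα hx₃
    linarith
  exact hγ (eq_zero_of_pow_eq_zero hcube)

theorem stmt8 (α β γ δ lam x₁ x₂ x₃ : ℝ)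
    (hag : α * γ = 0) (hsum : α + δ ≠ 0)
    (h1 : γ * x₃ = 0)
    (h2 : α * x₁ + γ * x₂ + β * x₃ = 0)
    (h3 : 2 * α * x₃ + γ^3 - lam = 0)
    (h4 : γ^3 - 2 * δ * x₃ + 2 * lam = 0)
    (h5 : β * γ^2 + 4 * β * x₁ + 4 * δ * x₂ = 0) :
    γ = 0 :=
  stmt8_general α γ δ lam x₃ hag h1 h3 h4
end

section
/- Let α, β, γ be real numbers with β ≠ 0 and α ≠ 0 satisfying 8γ³ − α³ − 4αγ² − 8β²γ = 0 and α² + 4αγ + 4β² − 8γ² = 0. Then α = −2γ and β² = 3γ². -/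
theorem stmt11_general (α β γ : ℝ) (hβ : β ≠ 0)
    (h1 : 8 * γ^3 - α^3 - 4 * α * γ^2 - 8 * β^2 * γ = 0)
    (h2 : α^2 + 4 * α * γ + 4 * β^2 - 8 * γ^2 = 0) :
    α = -2 * γ ∧ β^2 = 3 * γ^2 := by
  -- eliminating `β²` between the two equations
  have hcubic : (α - 2 * γ)^2 * (α + 2 * γ) = 0 := by linear_combination -h1 - 2 * γ * h2
  have hα : α = -2 * γ := by
    rcases mul_eq_zero.mp hcubic with hsq | hlin
    · have hα : α = 2 * γ := sub_eq_zero.mp (pow_eq_zero_iff two_ne_zero |>.mp hsq)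
      have hsum : β^2 + γ^2 = 0 := by linear_combination (h2 - (α + 6 * γ) * hα) / 4
      exact absurd (pow_eq_zero_iff two_ne_zero |>.mp (by nlinarith [sq_nonneg γ])) hβ
    · linear_combination hlin
  exact ⟨hα, by linear_combination (h2 - (α + 2 * γ) * hα) / 4⟩

theorem stmt11 (α β γ : ℝ) (hβ : β ≠ 0) (hα : α ≠ 0)
    (h1 : 8 * γ^3 - α^3 - 4 * α * γ^2 - 8 * β^2 * γ = 0)
    (h2 : α^2 + 4 * α * γ + 4 * β^2 - 8 * γ^2 = 0) :
    α = -2 * γ ∧ β^2 = 3 * γ^2 :=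
  stmt11_general α β γ hβ h1 h2
end

section
/- On ℝ³ with coordinates (x,y,z), equip the Heisenberg group H₃ with the Lorentzian metric g₁ = −dx² + dy² + (x dy + dz)². The vector field X = (3/4)x ∂_x + (3/4)y ∂_y + (3/2)z ∂_z satisfies ℒ_X g₁ + C = 2 g₁, where C is the symmetric (0,2)-tensor whose only nonzero components are C(∂_x,∂_x) = −1/2, C(∂_y,∂_y) = 1/2 − x², C(∂_y,∂_z) = C(∂_z,∂_y) = −x, C(∂_z,∂_z) = −1. That is, (H₃, g₁, X) is a shrinking Cotton soliton with λ = 2. -/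
open scoped Matrix

/-- The partial derivative `∂_k f` at `p` of a function on `ℝ³`. -/
noncomputable def pd12 (f : (Fin 3 → ℝ) → ℝ) (k : Fin 3) (p : Fin 3 → ℝ) : ℝ :=
  fderiv ℝ f p (Pi.single k 1)

/-- The Lorentzian metric `g₁ = -dx² + dy² + (x dy + dz)²` on the Heisenberg group
`H₃ = ℝ³`, in coordinates `p = (x,y,z)`. -/
noncomputable def heisMetric (p : Fin 3 → ℝ) : Matrix (Fin 3) (Fin 3) ℝ :=
  !![(-1), 0, 0; 0, 1 + (p 0)^2, p 0; 0, p 0, 1]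

/-- The Cotton tensor of `g₁`. -/
noncomputable def heisCotton (p : Fin 3 → ℝ) : Matrix (Fin 3) (Fin 3) ℝ :=
  !![(-(1:ℝ)/2), 0, 0; 0, 1/2 - (p 0)^2, -(p 0); 0, -(p 0), -1]

/-- The vector field `X = (3/4)x ∂_x + (3/4)y ∂_y + (3/2)z ∂_z`. -/
noncomputable def heisX (p : Fin 3 → ℝ) : Fin 3 → ℝ :=
  ![3 / 4 * p 0, 3 / 4 * p 1, 3 / 2 * p 2]

/-- The Lie derivative `(ℒ_X g)_{ij} = X^k ∂_k g_{ij} + g_{kj} ∂_i X^k + g_{ik} ∂_j X^k`. -/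
noncomputable def heisLieDeriv (p : Fin 3 → ℝ) (i j : Fin 3) : ℝ :=
  (∑ k, heisX p k * pd12 (fun q => heisMetric q i j) k p)
  + (∑ k, heisMetric p k j * pd12 (fun q => heisX q k) i p)
  + (∑ k, heisMetric p i k * pd12 (fun q => heisX q k) j p)

lemma hproj (m : Fin 3) (p : Fin 3 → ℝ) :
    HasFDerivAt (fun q : Fin 3 → ℝ => q m)
      (ContinuousLinearMap.proj m : (Fin 3 → ℝ) →L[ℝ] ℝ) p :=
  (ContinuousLinearMap.proj m : (Fin 3 → ℝ) →L[ℝ] ℝ).hasFDerivAt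

lemma pd_lin (c : ℝ) (m k : Fin 3) (p : Fin 3 → ℝ) :
    pd12 (fun q => c * q m) k p = c * (Pi.single k 1 : Fin 3 → ℝ) m := by
  have h := (hproj m p).const_mul c
  rw [pd12, h.fderiv]; simp

lemma pd_sq (k : Fin 3) (p : Fin 3 → ℝ) :
    pd12 (fun q => 1 + (q 0)^2) k p = 2 * p 0 * (Pi.single k 1 : Fin 3 → ℝ) 0 := by
  have h := ((hproj 0 p).mul (hproj 0 p)).const_add 1
  simp only [pow_two]
  rw [pd12, show (fun q : Fin 3 → ℝ => 1 + q 0 * q 0) = (fun x => 1 + ((fun q : Fin 3 → ℝ => q 0) * fun q : Fin 3 → ℝ => q 0) x) from rfl, h.fderiv]; simp; ring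

lemma pd_coord (m k : Fin 3) (p : Fin 3 → ℝ) :
    pd12 (fun q => q m) k p = (Pi.single k 1 : Fin 3 → ℝ) m := by
  rw [pd12, (hproj m p).fderiv]; simp

lemma pd_const (c : ℝ) (k : Fin 3) (p : Fin 3 → ℝ) :
    pd12 (fun _ => c) k p = 0 := by
  rw [pd12, fderiv_fun_const]; simp

/-- `(H₃, g₁, X)` is a shrinking Cotton soliton: `ℒ_X g₁ + C = 2 g₁`. -/
theorem stmt12 : ∀ (p : Fin 3 → ℝ) (i j : Fin 3),
    heisLieDeriv p i j + heisCotton p i j = 2 * heisMetric p i j := by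
  intro p i j
  fin_cases i <;> fin_cases j <;>
    simp [heisLieDeriv, Fin.sum_univ_three, heisMetric, heisX, heisCotton,
      pd_const, pd_coord, pd_lin, pd_sq, Pi.single_apply,
      Matrix.vecHead, Matrix.vecTail] <;> ring
end

section
/- Let α, β, γ, λ be real numbers with β ≠ 0 satisfying α³ + 4αγ² + 8β²γ − 8γ³ − λ = 0, α² + 4αγ + 4β² − 8γ² = 0, and αλ = 0. Then either α = 0 (and then β² = 2γ² with λ = 8β²γ − 8γ³), or λ = 0 (and then α = −2γ and β² = 3γ²). -/
/-! If `α = 0` the quadratic equation gives `β² = 2γ²` and the cubic one gives `λ`. If `λ = 0`,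
the cubic equation minus `2γ` times the quadratic one reads `(α - 2γ)² (α + 2γ) = 0`; the root
`α = 2γ` would turn the quadratic equation into `4 (β² + γ²) = 0`, impossible for `β ≠ 0`, so
`α = -2γ` and then `β² = 3γ²`. -/

lemma eq_neg_two_mul_of_lam_eq_zero {α β γ : ℝ} (hβ : β ≠ 0)
    (h1 : α^3 + 4 * α * γ^2 + 8 * β^2 * γ - 8 * γ^3 = 0)
    (h2 : α^2 + 4 * α * γ + 4 * β^2 - 8 * γ^2 = 0) :
    α = -2 * γ := by
  have hfac : (α - 2 * γ)^2 * (α + 2 * γ) = 0 := by linear_combination h1 - 2 * γ * h2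
  rcases mul_eq_zero.mp hfac with h | h
  · have hα : α = 2 * γ := by linear_combination (pow_eq_zero_iff two_ne_zero).mp h
    have hzero : β^2 + γ^2 = 0 := by subst hα; linear_combination h2 / 4
    have hpos : 0 < β^2 + γ^2 := by positivity
    exact absurd hzero hpos.ne'
  · linear_combination h

theorem stmt19 (α β γ lam : ℝ) (hβ : β ≠ 0)
    (h1 : α^3 + 4 * α * γ^2 + 8 * β^2 * γ - 8 * γ^3 - lam = 0)
    (h2 : α^2 + 4 * α * γ + 4 * β^2 - 8 * γ^2 = 0)
    (h3 : α * lam = 0) :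
    (α = 0 ∧ β^2 = 2 * γ^2 ∧ lam = 8 * β^2 * γ - 8 * γ^3) ∨
    (lam = 0 ∧ α = -2 * γ ∧ β^2 = 3 * γ^2) := by
  rcases mul_eq_zero.mp h3 with rfl | rfl
  · exact Or.inl ⟨rfl, by linear_combination h2 / 4, by linear_combination -h1⟩
  · have hα := eq_neg_two_mul_of_lam_eq_zero hβ (by linear_combination h1) h2
    exact Or.inr ⟨rfl, hα, by subst hα; linear_combination h2 / 4⟩
end
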